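/- arXiv:1905.04730 — 4 statements merged into one kernel-verified Lean document; each statement's English description precedes it below -/
import Mathlib

section
/- Let λ > 0, let μ be a finite (nonnegative) measure on ℝ^l, let T be a finite signed measure on ℝ^d, and let g : ℝ^l × ℝ^n → ℝ^d be such that for each z the map θ ↦ g(z, θ) is measurable in z and Lipschitz in θ with a uniform constant L, i.e. ‖g(z, θ) − g(z, θ')‖ ≤ L‖θ − θ'‖ for all z ∈ ℝ^l and θ, θ' ∈ ℝ^n. Then the function θ ↦ F_λ((g(·, θ))_♯ μ − T) is Lipschitz continuous on ℝ^n with Lipschitz constant μ(ℝ^l) · L. (This is Proposition 3 of the paper, specialized to 0-currents, i.e. probability/finite measures.) -/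
open MeasureTheory

/-- Integration of a real function against a signed measure, via the Jordan decomposition. -/
noncomputable def sintegral {d : ℕ} (μ : SignedMeasure (EuclideanSpace ℝ (Fin d)))
    (f : EuclideanSpace ℝ (Fin d) → ℝ) : ℝ :=
  (∫ x, f x ∂μ.toJordanDecomposition.posPart) - ∫ x, f x ∂μ.toJordanDecomposition.negPart

/-- The scale-`lam` flat norm of a finite signed measure on `ℝ^d`:
the supremum of `∫ f dμ` over `1`-Lipschitz functions `f` with `|f| ≤ lam`. -/
noncomputable def flatNorm {d : ℕ} (lam : ℝ) (μ : SignedMeasure (EuclideanSpace ℝ (Fin d))) : ℝ :=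
  sSup { r : ℝ | ∃ f : EuclideanSpace ℝ (Fin d) → ℝ,
    LipschitzWith 1 f ∧ (∀ x, |f x| ≤ lam) ∧ r = sintegral μ f }


section Aux

variable {α : Type*} [MeasurableSpace α]

lemma aux_integrable_of_bdd {μ : Measure α} [IsFiniteMeasure μ] {f : α → ℝ} {C : ℝ}
    (hf : AEStronglyMeasurable f μ) (hb : ∀ x, |f x| ≤ C) : Integrable f μ :=
  (integrable_const C).mono' hf (ae_of_all _ fun x => by simpa using hb x)

lemma aux_measure_add_eq (A B C D : Measure α)
    [IsFiniteMeasure A] [IsFiniteMeasure B] [IsFiniteMeasure C] [IsFiniteMeasure D]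
    (h : A.toSignedMeasure - B.toSignedMeasure = C.toSignedMeasure - D.toSignedMeasure) :
    A + D = C + B := by
  ext s hs
  have h1 := congrArg (fun ν : SignedMeasure α => ν s) h
  simp only [VectorMeasure.sub_apply, Measure.toSignedMeasure_apply_measurable hs] at h1
  have h2 : (A s).toReal + (D s).toReal = (C s).toReal + (B s).toReal := by unfold Measure.real at h1; linarith
  rw [Measure.add_apply, Measure.add_apply]
  refine (ENNReal.toReal_eq_toReal_iff' (by finiteness) (by finiteness)).mp ?_
  rw [ENNReal.toReal_add (measure_ne_top _ _) (measure_ne_top _ _),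
    ENNReal.toReal_add (measure_ne_top _ _) (measure_ne_top _ _)]
  exact h2

end Aux

section Aux2

variable {d : ℕ}

local notation "E" => EuclideanSpace ℝ (Fin d)

lemma aux_sintegral_sub (P : Measure E) [IsFiniteMeasure P] (T : SignedMeasure E)
    (f : E → ℝ) (hc : Continuous f) (C : ℝ) (hb : ∀ x, |f x| ≤ C) :
    sintegral (P.toSignedMeasure - T) f = (∫ x, f x ∂P) - sintegral T f := by
  have hint : ∀ (m : Measure E) [IsFiniteMeasure m], Integrable f m := fun m _ =>
    aux_integrable_of_bdd hc.aestronglyMeasurable hb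
  have hJ : (P.toSignedMeasure - T).toJordanDecomposition.posPart.toSignedMeasure -
      (P.toSignedMeasure - T).toJordanDecomposition.negPart.toSignedMeasure =
      P.toSignedMeasure - T := by
    rw [← JordanDecomposition.toSignedMeasure, SignedMeasure.toSignedMeasure_toJordanDecomposition]
  have hT : T.toJordanDecomposition.posPart.toSignedMeasure -
      T.toJordanDecomposition.negPart.toSignedMeasure = T := by
    rw [← JordanDecomposition.toSignedMeasure, SignedMeasure.toSignedMeasure_toJordanDecomposition]
  have key : (P.toSignedMeasure - T).toJordanDecomposition.posPart.toSignedMeasure -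
      (P.toSignedMeasure - T).toJordanDecomposition.negPart.toSignedMeasure =
      (P + T.toJordanDecomposition.negPart).toSignedMeasure -
        T.toJordanDecomposition.posPart.toSignedMeasure := by
    rw [hJ]
    conv_lhs => rw [← hT]
    rw [Measure.toSignedMeasure_add]
    abel
  have hEq := aux_measure_add_eq _ _ _ _ key
  have hi1 := hint (P.toSignedMeasure - T).toJordanDecomposition.posPart
  have hi2 := hint (P.toSignedMeasure - T).toJordanDecomposition.negPart
  have hi3 := hint P
  have hi4 := hint T.toJordanDecomposition.posPart
  have hi5 := hint T.toJordanDecomposition.negPart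
  have hInt := congrArg (fun m : Measure E => ∫ x, f x ∂m) hEq
  simp only [integral_add_measure hi1 hi4, integral_add_measure (hi3.add_measure hi5) hi2,
    integral_add_measure hi3 hi5] at hInt
  unfold sintegral
  linarith

lemma aux_sintegral_le (ν : SignedMeasure E) (f : E → ℝ) (hc : Continuous f)
    (C : ℝ) (hb : ∀ x, |f x| ≤ C) :
    sintegral ν f ≤ C * (ν.toJordanDecomposition.posPart Set.univ).toReal
      + C * (ν.toJordanDecomposition.negPart Set.univ).toReal := by
  have h1 : ‖∫ x, f x ∂ν.toJordanDecomposition.posPart‖ ≤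
      C * (ν.toJordanDecomposition.posPart Set.univ).toReal :=
    norm_integral_le_of_norm_le_const (ae_of_all _ fun x => by simpa using hb x)
  have h2 : ‖∫ x, f x ∂ν.toJordanDecomposition.negPart‖ ≤
      C * (ν.toJordanDecomposition.negPart Set.univ).toReal :=
    norm_integral_le_of_norm_le_const (ae_of_all _ fun x => by simpa using hb x)
  rw [Real.norm_eq_abs] at h1 h2
  unfold sintegral
  have := abs_le.mp h1
  have := abs_le.mp h2
  linarith

end Aux2

section Main

variable {d : ℕ}

lemma aux_mem_flatSet (lam : ℝ) (hlam : 0 < lam) (ν : SignedMeasure (EuclideanSpace ℝ (Fin d))) :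
    (0 : ℝ) ∈ { r : ℝ | ∃ f : EuclideanSpace ℝ (Fin d) → ℝ,
      LipschitzWith 1 f ∧ (∀ x, |f x| ≤ lam) ∧ r = sintegral ν f } := by
  refine ⟨fun _ => 0, (LipschitzWith.const' 0).weaken zero_le_one,
    fun x => by simpa using hlam.le, ?_⟩
  simp [sintegral]

lemma aux_bddAbove_flatSet (lam : ℝ) (ν : SignedMeasure (EuclideanSpace ℝ (Fin d))) :
    BddAbove { r : ℝ | ∃ f : EuclideanSpace ℝ (Fin d) → ℝ,
      LipschitzWith 1 f ∧ (∀ x, |f x| ≤ lam) ∧ r = sintegral ν f } := by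
  refine ⟨lam * (ν.toJordanDecomposition.posPart Set.univ).toReal
      + lam * (ν.toJordanDecomposition.negPart Set.univ).toReal, ?_⟩
  rintro r ⟨f, hf1, hf2, rfl⟩
  exact aux_sintegral_le ν f hf1.continuous lam hf2

/-- Proposition 3 (0-current case): if g(z, ·) is uniformly L-Lipschitz in θ, then
θ ↦ F_lam((g(·, θ))_♯ μ − T) is Lipschitz with constant μ(ℝ^l) * L. -/
theorem flatNorm_lipschitz_in_params {l n d : ℕ} (lam : ℝ) (hlam : 0 < lam)
    (μ : Measure (EuclideanSpace ℝ (Fin l))) [IsFiniteMeasure μ]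
    (T : SignedMeasure (EuclideanSpace ℝ (Fin d)))
    (g : EuclideanSpace ℝ (Fin l) → EuclideanSpace ℝ (Fin n) → EuclideanSpace ℝ (Fin d))
    (L : ℝ)
    (hmeas : ∀ θ, Measurable (fun z => g z θ))
    (hLip : ∀ z θ θ', ‖g z θ - g z θ'‖ ≤ L * ‖θ - θ'‖) :
    ∀ θ θ' : EuclideanSpace ℝ (Fin n),
      |flatNorm lam ((μ.map (fun z => g z θ)).toSignedMeasure - T) -
        flatNorm lam ((μ.map (fun z => g z θ')).toSignedMeasure - T)|
      ≤ (μ Set.univ).toReal * L * ‖θ - θ'‖ := by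
  have key : ∀ a b : EuclideanSpace ℝ (Fin n),
      flatNorm lam ((μ.map (fun z => g z a)).toSignedMeasure - T) ≤
      flatNorm lam ((μ.map (fun z => g z b)).toSignedMeasure - T) +
        (μ Set.univ).toReal * L * ‖a - b‖ := by
    intro a b
    unfold flatNorm
    refine csSup_le ⟨0, aux_mem_flatSet lam hlam _⟩ ?_
    rintro r ⟨f, hf1, hf2, rfl⟩
    have hrb : sintegral ((μ.map (fun z => g z b)).toSignedMeasure - T) f ∈
        { r : ℝ | ∃ f : EuclideanSpace ℝ (Fin d) → ℝ,
          LipschitzWith 1 f ∧ (∀ x, |f x| ≤ lam) ∧ r =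
            sintegral ((μ.map (fun z => g z b)).toSignedMeasure - T) f } :=
      ⟨f, hf1, hf2, rfl⟩
    have hle := le_csSup (aux_bddAbove_flatSet lam _) hrb
    -- integrability facts
    have hfc : Continuous f := hf1.continuous
    have hia : Integrable (fun z => f (g z a)) μ :=
      aux_integrable_of_bdd (hfc.measurable.comp (hmeas a)).aestronglyMeasurable
        (fun z => hf2 _)
    have hib : Integrable (fun z => f (g z b)) μ :=
      aux_integrable_of_bdd (hfc.measurable.comp (hmeas b)).aestronglyMeasurable
        (fun z => hf2 _)
    have hdiff : sintegral ((μ.map (fun z => g z a)).toSignedMeasure - T) f -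
        sintegral ((μ.map (fun z => g z b)).toSignedMeasure - T) f ≤
        (μ Set.univ).toReal * L * ‖a - b‖ := by
      rw [aux_sintegral_sub _ T f hfc lam hf2, aux_sintegral_sub _ T f hfc lam hf2,
        integral_map (hmeas a).aemeasurable hfc.aestronglyMeasurable,
        integral_map (hmeas b).aemeasurable hfc.aestronglyMeasurable]
      have step : (∫ z, f (g z a) ∂μ) - (∫ z, f (g z b) ∂μ)
          ≤ (μ Set.univ).toReal * L * ‖a - b‖ := by
        rw [← integral_sub hia hib]
        have hmono : ∫ z, (f (g z a) - f (g z b)) ∂μ ≤ ∫ _z, L * ‖a - b‖ ∂μ := by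
          refine integral_mono (hia.sub hib) (integrable_const _) ?_
          intro z
          calc f (g z a) - f (g z b) ≤ |f (g z a) - f (g z b)| := le_abs_self _
            _ ≤ ‖g z a - g z b‖ := by
                have := hf1.dist_le_mul (g z a) (g z b)
                simpa [Real.dist_eq, dist_eq_norm] using this
            _ ≤ L * ‖a - b‖ := hLip z a b
        rw [integral_const, smul_eq_mul] at hmono
        unfold Measure.real at hmono
        linarith [hmono, mul_assoc (μ Set.univ).toReal L ‖a - b‖]
      linarith
    linarith
  intro θ θ'
  have h1 := key θ θ'
  have h2 := key θ' θ
  rw [norm_sub_rev θ' θ] at h2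
  rw [abs_sub_le_iff]
  constructor <;> linarith

end Main
end

section
/- Let λ > 0, let μ be a finite (nonnegative) measure on ℝ^l, let T be a finite signed measure on ℝ^d, and let g : ℝ^l × ℝ^n → ℝ^d satisfy ‖g(z, θ) − g(z, θ')‖ ≤ L‖θ − θ'‖ for all z ∈ ℝ^l and θ, θ' ∈ ℝ^n, with g(·, θ) measurable for each θ. Then the function h(θ) = F_λ((g(·, θ))_♯ μ − T) is differentiable at Lebesgue-almost every θ ∈ ℝ^n. (This is the almost-everywhere differentiability assertion of Proposition 3, obtained from Lipschitz continuity via Rademacher's theorem, specialized to 0-currents.) -/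
open MeasureTheory

namespace FlatGANAux

lemma integrable_of_bdd {α : Type*} [MeasurableSpace α] [TopologicalSpace α]
    [OpensMeasurableSpace α] {ν : Measure α} [IsFiniteMeasure ν] {f : α → ℝ} {C : ℝ}
    (hf : AEStronglyMeasurable f ν) (hb : ∀ x, |f x| ≤ C) : Integrable f ν :=
  (integrable_const C).mono' hf
    (Filter.Eventually.of_forall fun x => by simpa [Real.norm_eq_abs] using hb x)

lemma jordan_add_eq {α : Type*} [MeasurableSpace α] (A B : Measure α)
    [IsFiniteMeasure A] [IsFiniteMeasure B] :
    (A.toSignedMeasure - B.toSignedMeasure).toJordanDecomposition.posPart + B =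
    (A.toSignedMeasure - B.toSignedMeasure).toJordanDecomposition.negPart + A := by
  set ν := A.toSignedMeasure - B.toSignedMeasure with hν
  ext s hs
  have h1 : ν.toJordanDecomposition.toSignedMeasure s = ν s := by
    rw [SignedMeasure.toSignedMeasure_toJordanDecomposition]
  rw [JordanDecomposition.toSignedMeasure, VectorMeasure.sub_apply,
    Measure.toSignedMeasure_apply_measurable hs,
    Measure.toSignedMeasure_apply_measurable hs] at h1
  simp only [Measure.real] at h1
  have h2 : ν s = (A s).toReal - (B s).toReal := by
    rw [hν, VectorMeasure.sub_apply, Measure.toSignedMeasure_apply_measurable hs,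
      Measure.toSignedMeasure_apply_measurable hs]
    rfl
  simp only [Measure.add_apply]
  rw [← ENNReal.toReal_eq_toReal_iff' (by finiteness) (by finiteness),
    ENNReal.toReal_add (measure_ne_top _ _) (measure_ne_top _ _),
    ENNReal.toReal_add (measure_ne_top _ _) (measure_ne_top _ _)]
  linarith [h1, h2]

lemma sintegral_sub {d : ℕ} (A B : Measure (EuclideanSpace ℝ (Fin d)))
    [IsFiniteMeasure A] [IsFiniteMeasure B]
    {f : EuclideanSpace ℝ (Fin d) → ℝ} (hf : Continuous f) {C : ℝ} (hb : ∀ x, |f x| ≤ C) :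
    sintegral (A.toSignedMeasure - B.toSignedMeasure) f = (∫ x, f x ∂A) - ∫ x, f x ∂B := by
  have key := jordan_add_eq A B
  have h : (∫ x, f x ∂((A.toSignedMeasure - B.toSignedMeasure).toJordanDecomposition.posPart + B))
      = ∫ x, f x ∂((A.toSignedMeasure - B.toSignedMeasure).toJordanDecomposition.negPart + A) := by
    rw [key]
  rw [integral_add_measure (integrable_of_bdd hf.aestronglyMeasurable hb) (integrable_of_bdd hf.aestronglyMeasurable hb),
    integral_add_measure (integrable_of_bdd hf.aestronglyMeasurable hb) (integrable_of_bdd hf.aestronglyMeasurable hb)] at h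
  unfold sintegral
  linarith

lemma mem_flatNormSet {d : ℕ} (lam : ℝ) (hlam : 0 < lam)
    (ν : SignedMeasure (EuclideanSpace ℝ (Fin d))) :
    (0 : ℝ) ∈ { r : ℝ | ∃ f : EuclideanSpace ℝ (Fin d) → ℝ,
      LipschitzWith 1 f ∧ (∀ x, |f x| ≤ lam) ∧ r = sintegral ν f } := by
  refine ⟨fun _ => 0, (LipschitzWith.const 0).weaken zero_le_one,
    fun x => by simpa using hlam.le, ?_⟩
  simp [sintegral]

lemma bddAbove_flatNormSet {d : ℕ} (lam : ℝ)
    (ν : SignedMeasure (EuclideanSpace ℝ (Fin d))) :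
    BddAbove { r : ℝ | ∃ f : EuclideanSpace ℝ (Fin d) → ℝ,
      LipschitzWith 1 f ∧ (∀ x, |f x| ≤ lam) ∧ r = sintegral ν f } := by
  refine ⟨lam * (ν.toJordanDecomposition.posPart Set.univ).toReal
    + lam * (ν.toJordanDecomposition.negPart Set.univ).toReal, ?_⟩
  rintro r ⟨f, hf, hb, rfl⟩
  have h1 : |∫ x, f x ∂ν.toJordanDecomposition.posPart|
      ≤ lam * (ν.toJordanDecomposition.posPart Set.univ).toReal := by
    simpa [Real.norm_eq_abs, Measure.real] using
      norm_integral_le_of_norm_le_const (μ := ν.toJordanDecomposition.posPart) (f := f)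
        (ae_of_all _ fun x => by simpa [Real.norm_eq_abs] using hb x)
  have h2 : |∫ x, f x ∂ν.toJordanDecomposition.negPart|
      ≤ lam * (ν.toJordanDecomposition.negPart Set.univ).toReal := by
    simpa [Real.norm_eq_abs, Measure.real] using
      norm_integral_le_of_norm_le_const (μ := ν.toJordanDecomposition.negPart) (f := f)
        (ae_of_all _ fun x => by simpa [Real.norm_eq_abs] using hb x)
  unfold sintegral
  have := abs_le.1 h1
  have := abs_le.1 h2
  linarith

end FlatGANAux

/-- Almost-everywhere differentiability of the FlatGAN objective (via Rademacher). -/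
theorem flatNorm_ae_differentiable {l n d : ℕ} (lam : ℝ) (hlam : 0 < lam)
    (μ : Measure (EuclideanSpace ℝ (Fin l))) [IsFiniteMeasure μ]
    (T : SignedMeasure (EuclideanSpace ℝ (Fin d)))
    (g : EuclideanSpace ℝ (Fin l) → EuclideanSpace ℝ (Fin n) → EuclideanSpace ℝ (Fin d))
    (L : ℝ)
    (hmeas : ∀ θ, Measurable (fun z => g z θ))
    (hLip : ∀ z θ θ', ‖g z θ - g z θ'‖ ≤ L * ‖θ - θ'‖) :
    ∀ᵐ θ ∂(volume : Measure (EuclideanSpace ℝ (Fin n))),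
      DifferentiableAt ℝ
        (fun θ => flatNorm lam ((μ.map (fun z => g z θ)).toSignedMeasure - T)) θ := by
  classical
  set Tp := T.toJordanDecomposition.posPart with hTp
  set Tn := T.toJordanDecomposition.negPart with hTn
  have hT : T = Tp.toSignedMeasure - Tn.toSignedMeasure := by
    conv_lhs => rw [← T.toSignedMeasure_toJordanDecomposition]
    rfl
  -- rewrite ν θ as a difference of (finite) measures
  have hν : ∀ θ, (μ.map (fun z => g z θ)).toSignedMeasure - T
      = ((μ.map (fun z => g z θ)) + Tn).toSignedMeasure - Tp.toSignedMeasure := by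
    intro θ
    have : IsFiniteMeasure (μ.map (fun z => g z θ)) := by
      exact Measure.isFiniteMeasure_map μ _
    rw [Measure.toSignedMeasure_add]
    have h2 : (μ.map (fun z => g z θ)).toSignedMeasure + Tn.toSignedMeasure
        - Tp.toSignedMeasure = (μ.map (fun z => g z θ)).toSignedMeasure
        - (Tp.toSignedMeasure - Tn.toSignedMeasure) := by abel
    rw [h2, ← hT]
  -- the value of sintegral on admissible f
  have hval : ∀ θ (f : EuclideanSpace ℝ (Fin d) → ℝ), Continuous f → (∀ x, |f x| ≤ lam) →
      sintegral ((μ.map (fun z => g z θ)).toSignedMeasure - T) f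
        = (∫ z, f (g z θ) ∂μ) + ((∫ x, f x ∂Tn) - ∫ x, f x ∂Tp) := by
    intro θ f hfc hfb
    have : IsFiniteMeasure (μ.map (fun z => g z θ)) := Measure.isFiniteMeasure_map μ _
    rw [hν θ, FlatGANAux.sintegral_sub _ _ hfc hfb (C := lam),
      integral_add_measure (FlatGANAux.integrable_of_bdd hfc.aestronglyMeasurable hfb)
        (FlatGANAux.integrable_of_bdd hfc.aestronglyMeasurable hfb),
      integral_map (hmeas θ).aemeasurable hfc.aestronglyMeasurable]
    ring
  set K : NNReal := ⟨max L 0 * (μ Set.univ).toReal, by positivity⟩ with hK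
  -- key estimate between sintegrals at different parameters
  have hest : ∀ θ θ' (f : EuclideanSpace ℝ (Fin d) → ℝ), LipschitzWith 1 f →
      (∀ x, |f x| ≤ lam) →
      sintegral ((μ.map (fun z => g z θ)).toSignedMeasure - T) f
        ≤ sintegral ((μ.map (fun z => g z θ')).toSignedMeasure - T) f + K * dist θ θ' := by
    intro θ θ' f hf hfb
    have hfc : Continuous f := hf.continuous
    rw [hval θ f hfc hfb, hval θ' f hfc hfb]
    have hint : ∀ σ, Integrable (fun z => f (g z σ)) μ := fun σ =>
      FlatGANAux.integrable_of_bdd ((hfc.measurable.comp (hmeas σ)).aestronglyMeasurable)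
        (fun z => hfb _)
    have hpt : ∀ z, f (g z θ) - f (g z θ') ≤ max L 0 * dist θ θ' := by
      intro z
      have h1 : f (g z θ) - f (g z θ') ≤ dist (f (g z θ)) (f (g z θ')) := by
        rw [Real.dist_eq]; exact le_abs_self _
      have h2 : dist (f (g z θ)) (f (g z θ')) ≤ dist (g z θ) (g z θ') := by
        simpa using hf.dist_le_mul (g z θ) (g z θ')
      have h3 : dist (g z θ) (g z θ') ≤ L * ‖θ - θ'‖ := by
        rw [dist_eq_norm]; exact hLip z θ θ'
      have h4 : L * ‖θ - θ'‖ ≤ max L 0 * ‖θ - θ'‖ :=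
        mul_le_mul_of_nonneg_right (le_max_left _ _) (norm_nonneg _)
      rw [dist_eq_norm]
      linarith
    have hdiff : (∫ z, f (g z θ) ∂μ) - ∫ z, f (g z θ') ∂μ ≤ K * dist θ θ' := by
      rw [← integral_sub (hint θ) (hint θ')]
      calc (∫ z, f (g z θ) - f (g z θ') ∂μ) ≤ ∫ _, max L 0 * dist θ θ' ∂μ :=
            integral_mono ((hint θ).sub (hint θ')) (integrable_const _) hpt
        _ = (μ Set.univ).toReal * (max L 0 * dist θ θ') := by
            rw [integral_const, smul_eq_mul]
            rfl
        _ = K * dist θ θ' := by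
            show _ = max L 0 * (μ Set.univ).toReal * dist θ θ'
            ring
    linarith
  -- the objective is Lipschitz
  have hstep : ∀ θ θ', flatNorm lam ((μ.map (fun z => g z θ)).toSignedMeasure - T)
      ≤ flatNorm lam ((μ.map (fun z => g z θ')).toSignedMeasure - T) + K * dist θ θ' := by
    intro θ θ'
    have hbdd := FlatGANAux.bddAbove_flatNormSet lam
      ((μ.map (fun z => g z θ')).toSignedMeasure - T)
    have hnn : (0 : ℝ) ≤ flatNorm lam ((μ.map (fun z => g z θ')).toSignedMeasure - T) :=
      le_csSup hbdd (FlatGANAux.mem_flatNormSet lam hlam _)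
    refine Real.sSup_le ?_ (by positivity)
    rintro r ⟨f, hf, hfb, rfl⟩
    have : sintegral ((μ.map (fun z => g z θ')).toSignedMeasure - T) f
        ≤ flatNorm lam ((μ.map (fun z => g z θ')).toSignedMeasure - T) :=
      le_csSup hbdd ⟨f, hf, hfb, rfl⟩
    have := hest θ θ' f hf hfb
    linarith
  have hLipH : LipschitzWith K
      (fun θ => flatNorm lam ((μ.map (fun z => g z θ)).toSignedMeasure - T)) := by
    refine LipschitzWith.of_dist_le_mul fun θ θ' => ?_
    rw [Real.dist_eq, abs_sub_le_iff]
    refine ⟨by linarith [hstep θ θ'], ?_⟩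
    have := hstep θ' θ
    rw [dist_comm θ' θ] at this
    linarith
  exact hLipH.ae_differentiableAt
end

section
/- Let λ > 0, let X ⊂ ℝ^d be a compact set, let c > 0, and let μ and (μ_j)_{j∈ℕ} be finite signed measures all supported in X with total variation ‖μ_j‖_TV ≤ c for all j. If μ_j converges weakly to μ, i.e. ∫ f dμ_j → ∫ f dμ for every bounded continuous function f : ℝ^d → ℝ, then F_λ(μ_j − μ) → 0 as j → ∞. (This is the other direction of Proposition 2 of the paper, specialized to 0-currents: the flat metric metrizes weak* convergence on compactly supported measures of uniformly bounded mass.) -/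
open MeasureTheory

section Aux

variable {d : ℕ}

lemma integrable_of_bdd (m : Measure (EuclideanSpace ℝ (Fin d))) [IsFiniteMeasure m]
    {f : EuclideanSpace ℝ (Fin d) → ℝ} (hf : Continuous f) {C : ℝ} (hC : ∀ x, |f x| ≤ C) :
    Integrable f m :=
  (integrable_const C).mono' hf.aestronglyMeasurable
    (Filter.Eventually.of_forall fun x => by simpa [Real.norm_eq_abs] using hC x)

lemma sintegral_sub_measure (ν μ : SignedMeasure (EuclideanSpace ℝ (Fin d)))
    {f : EuclideanSpace ℝ (Fin d) → ℝ} (hf : Continuous f) {C : ℝ} (hC : ∀ x, |f x| ≤ C) :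
    sintegral (ν - μ) f = sintegral ν f - sintegral μ f := by
  set σp := (ν - μ).toJordanDecomposition.posPart with hσp
  set σn := (ν - μ).toJordanDecomposition.negPart with hσn
  set νp := ν.toJordanDecomposition.posPart with hνp
  set νn := ν.toJordanDecomposition.negPart with hνn
  set μp := μ.toJordanDecomposition.posPart with hμp
  set μn := μ.toJordanDecomposition.negPart with hμn
  have h1 : σp.toSignedMeasure - σn.toSignedMeasure = ν - μ :=
    (ν - μ).toSignedMeasure_toJordanDecomposition
  have h2 : νp.toSignedMeasure - νn.toSignedMeasure = ν :=
    ν.toSignedMeasure_toJordanDecomposition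
  have h3 : μp.toSignedMeasure - μn.toSignedMeasure = μ :=
    μ.toSignedMeasure_toJordanDecomposition
  have key : σp + (νn + μp) = νp + μn + σn := by
    rw [← Measure.toSignedMeasure_eq_toSignedMeasure_iff]
    simp only [Measure.toSignedMeasure_add]
    have h4 : σp.toSignedMeasure - σn.toSignedMeasure =
        (νp.toSignedMeasure - νn.toSignedMeasure) - (μp.toSignedMeasure - μn.toSignedMeasure) := by
      rw [h1, h2, h3]
    have h5 : σp.toSignedMeasure =
        (νp.toSignedMeasure - νn.toSignedMeasure) - (μp.toSignedMeasure - μn.toSignedMeasure)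
          + σn.toSignedMeasure := sub_eq_iff_eq_add.mp h4
    rw [h5]; abel
  have hi : ∀ (m : Measure (EuclideanSpace ℝ (Fin d))) [IsFiniteMeasure m], Integrable f m :=
    fun m _ => integrable_of_bdd m hf hC
  have e1 : ∫ x, f x ∂(σp + (νn + μp)) =
      (∫ x, f x ∂σp) + ((∫ x, f x ∂νn) + ∫ x, f x ∂μp) := by
    rw [integral_add_measure (hi _) (hi _), integral_add_measure (hi _) (hi _)]
  have e2 : ∫ x, f x ∂(νp + μn + σn) =
      ((∫ x, f x ∂νp) + ∫ x, f x ∂μn) + ∫ x, f x ∂σn := by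
    rw [integral_add_measure (hi _) (hi _), integral_add_measure (hi _) (hi _)]
  have e3 : (∫ x, f x ∂σp) + ((∫ x, f x ∂νn) + ∫ x, f x ∂μp) =
      ((∫ x, f x ∂νp) + ∫ x, f x ∂μn) + ∫ x, f x ∂σn := by
    rw [← e1, ← e2, key]
  simp only [sintegral, ← hσp, ← hσn, ← hνp, ← hνn, ← hμp, ← hμn]
  linarith

lemma sintegral_sub_fun (ν : SignedMeasure (EuclideanSpace ℝ (Fin d)))
    {f g : EuclideanSpace ℝ (Fin d) → ℝ} (hf : Continuous f) {C : ℝ} (hC : ∀ x, |f x| ≤ C)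
    (hg : Continuous g) {D : ℝ} (hD : ∀ x, |g x| ≤ D) :
    sintegral ν (fun x => f x - g x) = sintegral ν f - sintegral ν g := by
  have hi : ∀ (m : Measure (EuclideanSpace ℝ (Fin d))) [IsFiniteMeasure m], Integrable f m :=
    fun m _ => integrable_of_bdd m hf hC
  have hi' : ∀ (m : Measure (EuclideanSpace ℝ (Fin d))) [IsFiniteMeasure m], Integrable g m :=
    fun m _ => integrable_of_bdd m hg hD
  simp only [sintegral, integral_sub (hi _) (hi' _)]
  ring

lemma sintegral_abs_le_of_supported (ν : SignedMeasure (EuclideanSpace ℝ (Fin d)))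
    {f : EuclideanSpace ℝ (Fin d) → ℝ} {B : ℝ} (X : Set (EuclideanSpace ℝ (Fin d)))
    (hX0 : ν.totalVariation Xᶜ = 0) (hfB : ∀ x ∈ X, |f x| ≤ B) :
    |sintegral ν f| ≤ B * (ν.totalVariation Set.univ).toReal := by
  set p := ν.toJordanDecomposition.posPart with hp
  set n := ν.toJordanDecomposition.negPart with hn
  have hpn : ν.totalVariation = p + n := rfl
  have hp0 : p Xᶜ = 0 := by
    have h := hX0
    rw [hpn, Measure.add_apply, add_eq_zero] at h
    exact h.1
  have hn0 : n Xᶜ = 0 := by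
    have h := hX0
    rw [hpn, Measure.add_apply, add_eq_zero] at h
    exact h.2
  have haep : ∀ᵐ x ∂p, ‖f x‖ ≤ B := by
    have hXae : ∀ᵐ x ∂p, x ∈ X := by
      rw [MeasureTheory.ae_iff]
      exact measure_mono_null (fun x hx => hx) hp0
    filter_upwards [hXae] with x hx
    simpa [Real.norm_eq_abs] using hfB x hx
  have haen : ∀ᵐ x ∂n, ‖f x‖ ≤ B := by
    have hXae : ∀ᵐ x ∂n, x ∈ X := by
      rw [MeasureTheory.ae_iff]
      exact measure_mono_null (fun x hx => hx) hn0
    filter_upwards [hXae] with x hx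
    simpa [Real.norm_eq_abs] using hfB x hx
  have b1 : |∫ x, f x ∂p| ≤ B * (p Set.univ).toReal := by
    simpa [Real.norm_eq_abs, measureReal_def] using norm_integral_le_of_norm_le_const haep
  have b2 : |∫ x, f x ∂n| ≤ B * (n Set.univ).toReal := by
    simpa [Real.norm_eq_abs, measureReal_def] using norm_integral_le_of_norm_le_const haen
  have hTV : (ν.totalVariation Set.univ).toReal = (p Set.univ).toReal + (n Set.univ).toReal := by
    rw [hpn, Measure.add_apply, ENNReal.toReal_add (measure_ne_top _ _) (measure_ne_top _ _)]
  rw [hTV, mul_add]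
  have b1' := abs_le.mp b1
  have b2' := abs_le.mp b2
  rw [sintegral]
  exact abs_le.mpr ⟨by linarith [b1'.1, b2'.2], by linarith [b1'.2, b2'.1]⟩

lemma sintegral_abs_le (ν : SignedMeasure (EuclideanSpace ℝ (Fin d)))
    {f : EuclideanSpace ℝ (Fin d) → ℝ} {B : ℝ} (hfB : ∀ x, |f x| ≤ B) :
    |sintegral ν f| ≤ B * (ν.totalVariation Set.univ).toReal :=
  sintegral_abs_le_of_supported ν Set.univ (by simp) (fun x _ => hfB x)

lemma lipschitzWith_inf' {ι : Type*} (s : Finset ι) (hs : s.Nonempty)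
    (h : ι → EuclideanSpace ℝ (Fin d) → ℝ) (hh : ∀ i, LipschitzWith 1 (h i)) :
    LipschitzWith 1 (fun x => s.inf' hs fun i => h i x) := by
  apply LipschitzWith.of_dist_le_mul
  intro x y
  rw [NNReal.coe_one, one_mul, Real.dist_eq, abs_sub_le_iff]
  constructor
  · obtain ⟨i, hi, hieq⟩ := s.exists_mem_eq_inf' hs (fun i => h i y)
    have h1 : s.inf' hs (fun i => h i x) ≤ h i x := Finset.inf'_le _ hi
    have h2 := abs_le.mp (by simpa [Real.dist_eq] using (hh i).dist_le_mul x y)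
    rw [hieq]
    linarith [h2.2]
  · obtain ⟨i, hi, hieq⟩ := s.exists_mem_eq_inf' hs (fun i => h i x)
    have h1 : s.inf' hs (fun i => h i y) ≤ h i y := Finset.inf'_le _ hi
    have h2 := abs_le.mp (by simpa [Real.dist_eq] using (hh i).dist_le_mul x y)
    rw [hieq]
    linarith [h2.1]

end Aux


/-- Proposition 2, other direction: weak convergence implies flat convergence,
for signed measures supported in a compact set with uniformly bounded total variation. -/
theorem flat_conv_of_weak_conv {d : ℕ} (lam : ℝ) (hlam : 0 < lam)
    (X : Set (EuclideanSpace ℝ (Fin d))) (hX : IsCompact X) (c : ℝ) (hc : 0 < c)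
    (μ : SignedMeasure (EuclideanSpace ℝ (Fin d)))
    (μs : ℕ → SignedMeasure (EuclideanSpace ℝ (Fin d)))
    (hsupp : μ.totalVariation Xᶜ = 0)
    (hsupps : ∀ j, (μs j).totalVariation Xᶜ = 0)
    (hTV : ∀ j, ((μs j).totalVariation Set.univ).toReal ≤ c)
    (hweak : ∀ f : EuclideanSpace ℝ (Fin d) → ℝ, Continuous f → (∃ C, ∀ x, |f x| ≤ C) →
      Filter.Tendsto (fun j => sintegral (μs j) f) Filter.atTop (nhds (sintegral μ f))) :
    Filter.Tendsto (fun j => flatNorm lam (μs j - μ)) Filter.atTop (nhds 0) := by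
  classical
  rw [Metric.tendsto_atTop]
  intro ε hε
  set M : ℝ := (μ.totalVariation Set.univ).toReal with hMdef
  have hM0 : 0 ≤ M := ENNReal.toReal_nonneg
  set δ : ℝ := ε / (12 * (c + M + 1)) with hδdef
  have hδ : 0 < δ := by positivity
  obtain ⟨t, htfin, htsub⟩ := Metric.totallyBounded_iff.mp hX.totallyBounded δ hδ
  obtain ⟨w, hwfin, hwsub⟩ :=
    Metric.totallyBounded_iff.mp (isCompact_Icc (a := -lam) (b := lam)).totallyBounded δ hδ
  set T : Finset (EuclideanSpace ℝ (Fin d)) := insert 0 htfin.toFinset with hTdef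
  have hTne : T.Nonempty := Finset.insert_nonempty _ _
  have hTa : T.attach.Nonempty := Finset.attach_nonempty_iff.mpr hTne
  have hval : ∀ v : ℝ, |v| ≤ lam → ∃ u, u ∈ w ∧ |v - u| ≤ δ := by
    intro v hv
    have hvmem : v ∈ Set.Icc (-lam) lam := ⟨(abs_le.mp hv).1, (abs_le.mp hv).2⟩
    obtain ⟨u, hu, hu2⟩ := Set.mem_iUnion₂.mp (hwsub hvmem)
    exact ⟨u, hu, le_of_lt (by simpa [Real.dist_eq] using Metric.mem_ball.mp hu2)⟩
  set g : (↥T → ℝ) → EuclideanSpace ℝ (Fin d) → ℝ := fun φ x =>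
    max (-lam) (min lam (T.attach.inf' hTa fun i =>
      φ i + dist x (i : EuclideanSpace ℝ (Fin d)))) with hgdef
  have hglip : ∀ φ, LipschitzWith 1 (g φ) := by
    intro φ
    have hinner : LipschitzWith 1 (fun x => T.attach.inf' hTa fun i =>
        φ i + dist x (i : EuclideanSpace ℝ (Fin d))) :=
      lipschitzWith_inf' _ _ _ (fun i => by
        simpa using (LipschitzWith.const (φ i)).add
          (LipschitzWith.dist_left (i : EuclideanSpace ℝ (Fin d))))
    exact (hinner.const_min lam).const_max (-lam)
  have hgbd : ∀ φ x, |g φ x| ≤ lam := by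
    intro φ x
    rw [abs_le]
    refine ⟨le_max_left _ _, max_le (by linarith) (min_le_left _ _)⟩
  set Φ : Set (↥T → ℝ) := Set.pi Set.univ (fun _ => (w : Set ℝ)) with hΦdef
  have hΦfin : Φ.Finite := Set.Finite.pi (fun _ => hwfin)
  have hev : ∀ᶠ j in Filter.atTop, ∀ φ ∈ Φ,
      |sintegral (μs j) (g φ) - sintegral μ (g φ)| < ε / 4 := by
    rw [Filter.eventually_all_finite hΦfin]
    intro φ _
    have htd := hweak (g φ) (hglip φ).continuous ⟨lam, hgbd φ⟩
    have h4 := Metric.tendsto_nhds.mp htd (ε / 4) (by positivity)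
    filter_upwards [h4] with j hj
    simpa [Real.dist_eq] using hj
  obtain ⟨N, hN⟩ := Filter.eventually_atTop.mp hev
  refine ⟨N, fun j hj => ?_⟩
  have hNj := hN j hj
  have hδε : δ * (12 * (c + M + 1)) = ε := by
    rw [hδdef]
    exact div_mul_cancel₀ ε (by positivity : (0:ℝ) < 12 * (c + M + 1)).ne'
  have hδbound : 3 * δ * c + 3 * δ * M ≤ ε / 4 := by nlinarith [hδ.le]
  have hSbd : ∀ r ∈ {r : ℝ | ∃ f : EuclideanSpace ℝ (Fin d) → ℝ,
      LipschitzWith 1 f ∧ (∀ x, |f x| ≤ lam) ∧ r = sintegral (μs j - μ) f}, r ≤ ε / 2 := by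
    rintro r ⟨f, hf1, hf2, rfl⟩
    set φ : ↥T → ℝ := fun i => (hval (f i) (hf2 i)).choose with hφdef
    have hφmem : ∀ i : ↥T, φ i ∈ w ∧ |f i - φ i| ≤ δ :=
      fun i => (hval (f i) (hf2 i)).choose_spec
    have hφΦ : φ ∈ Φ := Set.mem_univ_pi.mpr fun i => (hφmem i).1
    have happrox : ∀ x ∈ X, |f x - g φ x| ≤ 3 * δ := by
      intro x hx
      set s0 := T.attach.inf' hTa
        (fun i => φ i + dist x (i : EuclideanSpace ℝ (Fin d))) with hs0
      have hlow : f x - δ ≤ s0 := by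
        apply Finset.le_inf'
        intro i _
        have h1 := abs_le.mp (hφmem i).2
        have h2 := abs_le.mp (by
          simpa [Real.dist_eq] using hf1.dist_le_mul x (i : EuclideanSpace ℝ (Fin d)))
        linarith [h1.2, h2.2]
      have hup : s0 ≤ f x + 3 * δ := by
        obtain ⟨y, hy, hyd⟩ := Set.mem_iUnion₂.mp (htsub hx)
        have hyT : y ∈ T := Finset.mem_insert_of_mem (htfin.mem_toFinset.mpr hy)
        have hle : s0 ≤ φ ⟨y, hyT⟩ + dist x y :=
          Finset.inf'_le _ (Finset.mem_attach _ ⟨y, hyT⟩)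
        have h1 := abs_le.mp (hφmem ⟨y, hyT⟩).2
        have h2 := abs_le.mp (by simpa [Real.dist_eq] using hf1.dist_le_mul x y)
        have h3 : dist x y < δ := Metric.mem_ball.mp hyd
        simp only at hle h1 h2
        linarith [h1.1, h2.1]
      have hm1 : f x - δ ≤ min lam s0 :=
        le_min (by linarith [(abs_le.mp (hf2 x)).2]) hlow
      have hm2 : min lam s0 ≤ f x + 3 * δ := le_trans (min_le_right _ _) hup
      have hg1 : f x - δ ≤ g φ x := le_trans hm1 (le_max_right _ _)
      have hg2 : g φ x ≤ f x + 3 * δ :=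
        max_le (by linarith [(abs_le.mp (hf2 x)).1]) hm2
      rw [abs_le]
      constructor <;> linarith
    have hsplit : sintegral (μs j - μ) f = sintegral (μs j) f - sintegral μ f :=
      sintegral_sub_measure _ _ hf1.continuous hf2
    have e : sintegral (μs j - μ) f =
        (sintegral (μs j) (g φ) - sintegral μ (g φ))
        + ((sintegral (μs j) (fun x => f x - g φ x))
          - sintegral μ (fun x => f x - g φ x)) := by
      rw [hsplit, sintegral_sub_fun _ hf1.continuous hf2 (hglip φ).continuous (hgbd φ),
        sintegral_sub_fun _ hf1.continuous hf2 (hglip φ).continuous (hgbd φ)]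
      ring
    have hb1 : |sintegral (μs j) (fun x => f x - g φ x)| ≤ 3 * δ * c := by
      have h0 := sintegral_abs_le_of_supported (μs j) X (hsupps j) happrox
      calc |sintegral (μs j) (fun x => f x - g φ x)|
          ≤ 3 * δ * ((μs j).totalVariation Set.univ).toReal := h0
        _ ≤ 3 * δ * c := by
            have := hTV j
            nlinarith [hδ.le, ENNReal.toReal_nonneg (a := (μs j).totalVariation Set.univ)]
    have hb2 : |sintegral μ (fun x => f x - g φ x)| ≤ 3 * δ * M := by
      have h0 := sintegral_abs_le_of_supported μ X hsupp happrox
      rw [← hMdef] at h0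
      exact h0
    have hkey : |sintegral (μs j) (g φ) - sintegral μ (g φ)| < ε / 4 := hNj φ hφΦ
    have k1 := (abs_lt.mp hkey).2
    have k2 := (abs_le.mp hb1).2
    have k3 := (abs_le.mp hb2).1
    rw [e]
    linarith
  have hbdd : BddAbove {r : ℝ | ∃ f : EuclideanSpace ℝ (Fin d) → ℝ,
      LipschitzWith 1 f ∧ (∀ x, |f x| ≤ lam) ∧ r = sintegral (μs j - μ) f} := by
    refine ⟨lam * (((μs j - μ).totalVariation Set.univ).toReal), ?_⟩
    rintro r ⟨f, hf1, hf2, rfl⟩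
    exact (abs_le.mp (sintegral_abs_le _ hf2)).2
  have hmem0 : (0:ℝ) ∈ {r : ℝ | ∃ f : EuclideanSpace ℝ (Fin d) → ℝ,
      LipschitzWith 1 f ∧ (∀ x, |f x| ≤ lam) ∧ r = sintegral (μs j - μ) f} :=
    ⟨fun _ => 0, (LipschitzWith.const 0).weaken zero_le,
      fun x => by simp [hlam.le], by simp [sintegral]⟩
  have hnn : 0 ≤ flatNorm lam (μs j - μ) := le_csSup hbdd hmem0
  have hle : flatNorm lam (μs j - μ) ≤ ε / 2 := Real.sSup_le hSbd (by positivity)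
  rw [Real.dist_eq, sub_zero, abs_of_nonneg hnn]
  linarith
end

section
/- Let X ⊂ ℝ^d be a nonempty compact set, let μ and ν be Borel probability measures supported in X, and let λ ≥ diam(X)/2, where diam(X) = sup{‖x − y‖ : x, y ∈ X}. Then F_λ(μ − ν) = sup { ∫ f dμ − ∫ f dν : f : ℝ^d → ℝ is 1-Lipschitz }, i.e. for sufficiently large λ the flat metric between probability measures coincides with the Kantorovich–Rubinstein dual expression of the Wasserstein-1 distance. (This makes precise the paper's claim that for 0-currents and sufficiently large λ, the FlatGAN objective specializes to the Wasserstein GAN objective.) -/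
open MeasureTheory

section Aux

variable {d : ℕ}

/-- a.e. bounded continuous function is integrable w.r.t. a finite measure vanishing
outside a compact set. -/
lemma integrable_of_compact_support {X : Set (EuclideanSpace ℝ (Fin d))} (hX : IsCompact X)
    {f : EuclideanSpace ℝ (Fin d) → ℝ} (hf : Continuous f)
    (m : Measure (EuclideanSpace ℝ (Fin d))) [IsFiniteMeasure m] (hm : m Xᶜ = 0) :
    Integrable f m := by
  obtain ⟨C, hC⟩ := hX.exists_bound_of_continuousOn hf.continuousOn
  have hae : ∀ᵐ x ∂m, x ∈ X := by
    rw [ae_iff]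
    exact hm
  refine Integrable.mono' (integrable_const C) hf.aestronglyMeasurable ?_
  filter_upwards [hae] with x hx using hC x hx

lemma jordan_eq {d : ℕ} (μ ν : Measure (EuclideanSpace ℝ (Fin d)))
    [IsProbabilityMeasure μ] [IsProbabilityMeasure ν] :
    (μ.toSignedMeasure - ν.toSignedMeasure).toJordanDecomposition.posPart + ν
      = μ + (μ.toSignedMeasure - ν.toSignedMeasure).toJordanDecomposition.negPart := by
  set s := μ.toSignedMeasure - ν.toSignedMeasure
  have h1 : s.toJordanDecomposition.toSignedMeasure = s :=
    s.toSignedMeasure_toJordanDecomposition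
  rw [JordanDecomposition.toSignedMeasure] at h1
  rw [← Measure.toSignedMeasure_eq_toSignedMeasure_iff, Measure.toSignedMeasure_add,
    Measure.toSignedMeasure_add]
  have : s.toJordanDecomposition.posPart.toSignedMeasure
      - s.toJordanDecomposition.negPart.toSignedMeasure
      = μ.toSignedMeasure - ν.toSignedMeasure := h1
  linear_combination (norm := abel_nf) this

/-- The sintegral of a continuous function against `μ - ν` equals the difference of integrals. -/
lemma sintegral_eq {X : Set (EuclideanSpace ℝ (Fin d))} (hX : IsCompact X)
    (μ ν : Measure (EuclideanSpace ℝ (Fin d)))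
    [IsProbabilityMeasure μ] [IsProbabilityMeasure ν]
    (hμ : μ Xᶜ = 0) (hν : ν Xᶜ = 0)
    {f : EuclideanSpace ℝ (Fin d) → ℝ} (hf : Continuous f) :
    sintegral (μ.toSignedMeasure - ν.toSignedMeasure) f = (∫ x, f x ∂μ) - ∫ x, f x ∂ν := by
  set s := μ.toSignedMeasure - ν.toSignedMeasure with hs
  set p := s.toJordanDecomposition.posPart with hp
  set n := s.toJordanDecomposition.negPart with hn
  have hkey : p + ν = μ + n := jordan_eq μ ν
  -- mutual singularity to show support in X
  obtain ⟨S, hSm, hS1, hS2⟩ := s.toJordanDecomposition.mutuallySingular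
  have hXm : MeasurableSet X := hX.isClosed.measurableSet
  have hpX : p Xᶜ = 0 := by
    have hsplit : p Xᶜ = p (Xᶜ ∩ S) + p (Xᶜ ∩ Sᶜ) :=
      (measure_inter_add_diff Xᶜ hSm).symm
    have h1 : p (Xᶜ ∩ S) = 0 := measure_mono_null Set.inter_subset_right hS1
    have h2 : p (Xᶜ ∩ Sᶜ) = 0 := by
      have hμ0 : μ (Xᶜ ∩ Sᶜ) = 0 := measure_mono_null Set.inter_subset_left hμ
      have hn0 : n (Xᶜ ∩ Sᶜ) = 0 := measure_mono_null Set.inter_subset_right hS2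
      have : p (Xᶜ ∩ Sᶜ) + ν (Xᶜ ∩ Sᶜ) = μ (Xᶜ ∩ Sᶜ) + n (Xᶜ ∩ Sᶜ) := by
        rw [← Measure.add_apply, ← Measure.add_apply, hkey]
      rw [hμ0, hn0, add_zero] at this
      simpa using (add_eq_zero.mp this).1
    rw [hsplit, h1, h2, add_zero]
  have hnX : n Xᶜ = 0 := by
    have : p Xᶜ + ν Xᶜ = μ Xᶜ + n Xᶜ := by
      rw [← Measure.add_apply, ← Measure.add_apply, hkey]
    rw [hpX, hν, hμ] at this
    simpa using this.symm
  -- integrability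
  have hip : Integrable f p := integrable_of_compact_support hX hf p hpX
  have hin : Integrable f n := integrable_of_compact_support hX hf n hnX
  have hiμ : Integrable f μ := integrable_of_compact_support hX hf μ hμ
  have hiν : Integrable f ν := integrable_of_compact_support hX hf ν hν
  have hint : (∫ x, f x ∂p) + ∫ x, f x ∂ν = (∫ x, f x ∂μ) + ∫ x, f x ∂n := by
    rw [← integral_add_measure hip hiν, ← integral_add_measure hiμ hin, hkey]
  simp only [sintegral, ← hp, ← hn]
  linarith

end Aux

/-- For probability measures supported in a compact set X and lam >= diam(X)/2,
the flat metric coincides with the Kantorovich–Rubinstein dual of Wasserstein-1. -/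
theorem flatNorm_eq_wasserstein {d : ℕ}
    (X : Set (EuclideanSpace ℝ (Fin d))) (hX : IsCompact X) (hne : X.Nonempty)
    (μ ν : Measure (EuclideanSpace ℝ (Fin d)))
    [IsProbabilityMeasure μ] [IsProbabilityMeasure ν]
    (hμ : μ X = 1) (hν : ν X = 1)
    (lam : ℝ) (hlam : Metric.diam X / 2 ≤ lam) :
    flatNorm lam (μ.toSignedMeasure - ν.toSignedMeasure)
      = sSup { r : ℝ | ∃ f : EuclideanSpace ℝ (Fin d) → ℝ,
          LipschitzWith 1 f ∧ r = (∫ x, f x ∂μ) - ∫ x, f x ∂ν } := by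
  have hXm : MeasurableSet X := hX.isClosed.measurableSet
  have hμc : μ Xᶜ = 0 := by
    rw [measure_compl hXm (measure_ne_top _ _), hμ, measure_univ, tsub_self]
  have hνc : ν Xᶜ = 0 := by
    rw [measure_compl hXm (measure_ne_top _ _), hν, measure_univ, tsub_self]
  have hμae : ∀ᵐ x ∂μ, x ∈ X := by rw [ae_iff]; exact hμc
  have hνae : ∀ᵐ x ∂ν, x ∈ X := by rw [ae_iff]; exact hνc
  have hlam0 : 0 ≤ lam := le_trans (by positivity) hlam
  rw [flatNorm]
  congr 1
  ext r
  constructor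
  · rintro ⟨f, hfl, _, rfl⟩
    exact ⟨f, hfl, (sintegral_eq hX μ ν hμc hνc hfl.continuous).symm ▸ rfl⟩
  · rintro ⟨f, hfl, rfl⟩
    -- find min and max of f on X
    obtain ⟨xa, hxa, hmin⟩ := hX.exists_isMinOn hne hfl.continuous.continuousOn
    obtain ⟨xb, hxb, hmax⟩ := hX.exists_isMaxOn hne hfl.continuous.continuousOn
    set m : ℝ := (f xa + f xb) / 2 with hm
    have hbound : ∀ x ∈ X, |f x - m| ≤ lam := by
      intro x hx
      have h1 : f xa ≤ f x := hmin hx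
      have h2 : f x ≤ f xb := hmax hx
      have h3 : f xb - f xa ≤ dist xb xa := by
        have := hfl.dist_le_mul xb xa
        rw [NNReal.coe_one, one_mul] at this
        calc f xb - f xa ≤ |f xb - f xa| := le_abs_self _
          _ = dist (f xb) (f xa) := (Real.dist_eq _ _).symm
          _ ≤ dist xb xa := this
      have h4 : dist xb xa ≤ Metric.diam X := Metric.dist_le_diam_of_mem hX.isBounded hxb hxa
      rw [abs_le]
      constructor <;> [nlinarith; nlinarith]
    set g : EuclideanSpace ℝ (Fin d) → ℝ := fun x => max (-lam) (min lam (f x - m)) with hg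
    have hsubl : LipschitzWith 1 fun x => f x - m := by
      intro x y
      simpa [edist_sub_right] using hfl x y
    have hgl : LipschitzWith 1 g := (hsubl.const_min lam).const_max (-lam)
    have hgb : ∀ x, |g x| ≤ lam := by
      intro x
      rw [abs_le]
      refine ⟨le_max_left _ _, max_le (by linarith) (min_le_left _ _)⟩
    have hgX : ∀ x ∈ X, g x = f x - m := by
      intro x hx
      have := hbound x hx
      rw [abs_le] at this
      rw [hg]
      simp only
      rw [min_eq_right this.2, max_eq_right this.1]
    have hintg : ∀ (κ : Measure (EuclideanSpace ℝ (Fin d))), IsProbabilityMeasure κ →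
        (∀ᵐ x ∂κ, x ∈ X) → Integrable f κ → ∫ x, g x ∂κ = (∫ x, f x ∂κ) - m := by
      intro κ _ hκae hif
      have h1 : ∫ x, g x ∂κ = ∫ x, f x - m ∂κ := by
        refine integral_congr_ae ?_
        filter_upwards [hκae] with x hx using hgX x hx
      rw [h1, integral_sub hif (integrable_const m), integral_const, probReal_univ,
        one_smul]
    have hiμ : Integrable f μ := integrable_of_compact_support hX hfl.continuous μ hμc
    have hiν : Integrable f ν := integrable_of_compact_support hX hfl.continuous ν hνc
    refine ⟨g, hgl, hgb, ?_⟩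
    rw [sintegral_eq hX μ ν hμc hνc hgl.continuous,
      hintg μ inferInstance hμae hiμ, hintg ν inferInstance hνae hiν]
    ring
end
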